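/- Let κ < 0, ρ ∈ ℝ, and α > 0, with α < π/√ρ if ρ > 0. Set T = tan_ρ(α/2), S = sin_ρ(α), and σ = (√(1 − κS²) − 1)/(−κ·S·T). Then σ > 0, 1 + κσ²T² > 0, one has 2σT/(1 + κσ²T²) = S (equivalently sin_κ(2·arctan_κ(σ·T)) = sin_ρ(α)), and −log σ = log( −2κ·sin_ρ(α/2)² / (√(1 − κ·sin_ρ(α)²) − 1) ). -/

import Mathlib

open Real MeasureTheory Filter Asymptotics

/-- Inverse hyperbolic tangent. -/
noncomputable def artanh (y : ℝ) : ℝ := Real.log ((1 + y) / (1 - y)) / 2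

/-- The generalized sine function `sin_κ`. -/
noncomputable def sinK (κ t : ℝ) : ℝ :=
  if 0 < κ then Real.sin (Real.sqrt κ * t) / Real.sqrt κ
  else if κ < 0 then Real.sinh (Real.sqrt (-κ) * t) / Real.sqrt (-κ)
  else t

/-- The generalized cosine function `cos_κ = sin_κ'`. -/
noncomputable def cosK (κ t : ℝ) : ℝ :=
  if 0 < κ then Real.cos (Real.sqrt κ * t)
  else if κ < 0 then Real.cosh (Real.sqrt (-κ) * t)
  else 1

/-- The generalized tangent function `tan_κ`. -/
noncomputable def tanK (κ t : ℝ) : ℝ := sinK κ t / cosK κ t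

/-- The inverse function `arctan_κ` of `tan_κ`. -/
noncomputable def arctanK (κ x : ℝ) : ℝ :=
  if 0 < κ then Real.arctan (Real.sqrt κ * x) / Real.sqrt κ
  else if κ < 0 then _root_.artanh (Real.sqrt (-κ) * x) / Real.sqrt (-κ)
  else x

/-- `ω_{n-1}`, the (n-1)-volume of the unit sphere of ℝⁿ, i.e. `n` times the
volume of the unit ball. -/
noncomputable def omegaS (n : ℕ) : ℝ :=
  n * (volume (Metric.ball (0 : EuclideanSpace ℝ (Fin n)) 1)).toReal

/-- `A_κ(t)`: the volume of a geodesic sphere of radius `t` in the model space. -/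
noncomputable def AK (n : ℕ) (κ t : ℝ) : ℝ := omegaS n * sinK κ t ^ (n - 1)

/-- `V_κ(t)`: the volume of a geodesic ball of radius `t` in the model space. -/
noncomputable def VK (n : ℕ) (κ t : ℝ) : ℝ := omegaS n * ∫ s in (0:ℝ)..t, sinK κ s ^ (n - 1)

/-- The natural domain of `V_κ`: `[0, π/√κ)` when `κ > 0` and `[0, ∞)` otherwise. -/
noncomputable def domK (κ : ℝ) : Set ℝ :=
  if 0 < κ then Set.Ico 0 (Real.pi / Real.sqrt κ) else Set.Ici 0

/-- The range of `V_κ` (on its natural domain). -/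
noncomputable def rangeVK (n : ℕ) (κ : ℝ) : Set ℝ := VK n κ '' domK κ

/-- The inverse of `V_κ` on its natural domain. -/
noncomputable def VKinv (n : ℕ) (κ v : ℝ) : ℝ := sInf {t : ℝ | t ∈ domK κ ∧ VK n κ t = v}

/-- The isoperimetric profile `I_κ = A_κ ∘ V_κ⁻¹` of the model space. -/
noncomputable def IK (n : ℕ) (κ v : ℝ) : ℝ := AK n κ (VKinv n κ v)

/-! With `S = sin_ρ α`, `T = tan_ρ (α/2)` and `w = √(1 - κS²) > 1`, the number `u = σT = (w - 1)/(-κS)`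
is the positive root of `κS u² - 2u + S = 0`, i.e. of `2u/(1 + κu²) = S`, and `1 + κu² = 2/(w + 1)`.
The model-space double-angle formula `sin_κ (2 arctan_κ u) = 2u/(1 + κu²)` turns this into the
statement about `sin_κ`, and `S·T = 2 sin_ρ(α/2)²` (valid as `cos_ρ (α/2) > 0`) gives the formula
for `-log σ`. -/

theorem sinK_two_mul (κ t : ℝ) : sinK κ (2 * t) = 2 * sinK κ t * cosK κ t := by
  unfold sinK cosK
  split_ifs with hpos hneg
  · rw [mul_left_comm, Real.sin_two_mul]; ring
  · rw [mul_left_comm, Real.sinh_two_mul]; ring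
  · ring

theorem sinK_pos {κ t : ℝ} (ht : 0 < t) (hκ : 0 < κ → t < π / √κ) : 0 < sinK κ t := by
  unfold sinK
  split_ifs with hpos hneg
  · have hsq : 0 < √κ := Real.sqrt_pos.mpr hpos
    have hlt : √κ * t < π := by rw [lt_div_iff₀' hsq] at hκ; exact hκ hpos
    exact div_pos (Real.sin_pos_of_pos_of_lt_pi (by positivity) hlt) hsq
  · have hsq : 0 < √(-κ) := Real.sqrt_pos.mpr (neg_pos.mpr hneg)
    exact div_pos (Real.sinh_pos_iff.mpr (by positivity)) hsq
  · exact ht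

theorem cosK_pos {κ t : ℝ} (ht : 0 ≤ t) (hκ : 0 < κ → t < π / √κ / 2) : 0 < cosK κ t := by
  unfold cosK
  split_ifs with hpos hneg
  · have hsq : 0 < √κ := Real.sqrt_pos.mpr hpos
    have hlt : √κ * t < π / 2 := by
      rw [div_div, mul_comm √κ 2, ← div_div, lt_div_iff₀' hsq] at hκ; exact hκ hpos
    exact Real.cos_pos_of_mem_Ioo ⟨by nlinarith [Real.pi_pos], hlt⟩
  · exact Real.cosh_pos _
  · exact one_pos

theorem artanh_eq_real_artanh {y : ℝ} (hy : y ∈ Set.Icc (-1) 1) :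
    _root_.artanh y = Real.artanh y := by
  rw [Real.artanh_eq_half_log hy, _root_.artanh]; ring

theorem sinK_two_mul_arctanK {κ u : ℝ} (hu : 0 < 1 + κ * u ^ 2) :
    sinK κ (2 * arctanK κ u) = 2 * u / (1 + κ * u ^ 2) := by
  unfold sinK arctanK
  split_ifs with hpos hneg
  · have hsq : 0 < √κ := Real.sqrt_pos.mpr hpos
    have hx : (√κ * u) ^ 2 = κ * u ^ 2 := by rw [mul_pow, Real.sq_sqrt hpos.le]
    rw [show √κ * (2 * (arctan (√κ * u) / √κ)) = 2 * arctan (√κ * u) by field_simp,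
      Real.sin_two_mul, Real.sin_arctan, Real.cos_arctan, hx]
    field_simp
    rw [Real.sq_sqrt (by positivity)]
  · have hsq : 0 < √(-κ) := Real.sqrt_pos.mpr (neg_pos.mpr hneg)
    have hy : (√(-κ) * u) ^ 2 = -κ * u ^ 2 := by rw [mul_pow, Real.sq_sqrt (neg_pos.mpr hneg).le]
    have hy1 : √(-κ) * u ∈ Set.Ioo (-1) 1 := ⟨by nlinarith, by nlinarith⟩
    have hy' : 1 - (√(-κ) * u) ^ 2 = 1 + κ * u ^ 2 := by rw [hy]; ring
    rw [artanh_eq_real_artanh (Set.Ioo_subset_Icc_self hy1),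
      show √(-κ) * (2 * (Real.artanh (√(-κ) * u) / √(-κ))) = 2 * Real.artanh (√(-κ) * u) by
        field_simp,
      Real.sinh_two_mul, Real.sinh_artanh hy1, Real.cosh_artanh hy1, hy']
    field_simp
    rw [Real.sq_sqrt hu.le]
  · obtain rfl : κ = 0 := le_antisymm (not_lt.mp hpos) (not_lt.mp hneg)
    simp

theorem sinK_mul_tanK_half {κ t : ℝ} (hc : cosK κ (t / 2) ≠ 0) :
    sinK κ t * tanK κ (t / 2) = 2 * sinK κ (t / 2) ^ 2 := by
  conv_lhs => rw [← mul_div_cancel₀ t (two_ne_zero' ℝ), sinK_two_mul]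
  rw [tanK]
  field_simp

noncomputable def conformalSigma (κ S T : ℝ) : ℝ := (√(1 - κ * S ^ 2) - 1) / (-κ * S * T)

section conformalSigma

variable {κ S T : ℝ}

theorem one_lt_sqrt_one_sub_mul_sq (hκ : κ < 0) (hS : S ≠ 0) : 1 < √(1 - κ * S ^ 2) := by
  rw [Real.lt_sqrt zero_le_one]
  nlinarith [pow_pos (abs_pos.mpr hS) 2, sq_abs S]

theorem conformalSigma_pos (hκ : κ < 0) (hST : 0 < S * T) : 0 < conformalSigma κ S T := by
  have hw := one_lt_sqrt_one_sub_mul_sq hκ (left_ne_zero_of_mul hST.ne')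
  rw [conformalSigma, mul_assoc]
  exact div_pos (by linarith) (mul_pos (neg_pos.mpr hκ) hST)

theorem one_add_mul_conformalSigma_sq (hκ : κ < 0) (hS : S ≠ 0) (hT : T ≠ 0) :
    1 + κ * conformalSigma κ S T ^ 2 * T ^ 2 = 2 / (√(1 - κ * S ^ 2) + 1) := by
  have hw2 : √(1 - κ * S ^ 2) ^ 2 = 1 - κ * S ^ 2 := Real.sq_sqrt (by nlinarith [sq_nonneg S])
  rw [conformalSigma]
  field_simp [hκ.ne]
  linear_combination (√(1 - κ * S ^ 2) - 1) * hw2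

theorem two_mul_conformalSigma_mul_div (hκ : κ < 0) (hS : S ≠ 0) (hT : T ≠ 0) :
    2 * conformalSigma κ S T * T / (1 + κ * conformalSigma κ S T ^ 2 * T ^ 2) = S := by
  have hw2 : √(1 - κ * S ^ 2) ^ 2 = 1 - κ * S ^ 2 := Real.sq_sqrt (by nlinarith [sq_nonneg S])
  rw [one_add_mul_conformalSigma_sq hκ hS hT, conformalSigma]
  field_simp [hκ.ne]
  linear_combination -hw2

end conformalSigma

/-- The co-Lipschitz constant of the optimal conformal azimuthal map in negative
target curvature.  Let `κ < 0`, `α > 0` (with `α < π/√ρ` if `ρ > 0`), and set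
`T = tan_ρ(α/2)`, `S = sin_ρ(α)` and `σ = (√(1-κS²)-1)/(-κST)`.  Then `σ > 0`,
`1 + κσ²T² > 0`, `2σT/(1+κσ²T²) = S` (equivalently
`sin_κ(2·arctan_κ(σT)) = sin_ρ(α)`), and
`-log σ = log(-2κ·sin_ρ(α/2)²/(√(1-κ·sin_ρ(α)²)-1))`. -/
theorem optimal_conformal_sigma_negative_curvature (κ ρ α : ℝ) (hκ : κ < 0)
    (hα : 0 < α) (hρ : 0 < ρ → α < Real.pi / Real.sqrt ρ) :
    0 < (Real.sqrt (1 - κ * sinK ρ α ^ 2) - 1) / (-κ * sinK ρ α * tanK ρ (α / 2)) ∧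
    (0 < 1 + κ * ((Real.sqrt (1 - κ * sinK ρ α ^ 2) - 1) /
        (-κ * sinK ρ α * tanK ρ (α / 2))) ^ 2 * tanK ρ (α / 2) ^ 2) ∧
    (2 * ((Real.sqrt (1 - κ * sinK ρ α ^ 2) - 1) /
        (-κ * sinK ρ α * tanK ρ (α / 2))) * tanK ρ (α / 2) /
      (1 + κ * ((Real.sqrt (1 - κ * sinK ρ α ^ 2) - 1) /
        (-κ * sinK ρ α * tanK ρ (α / 2))) ^ 2 * tanK ρ (α / 2) ^ 2)
      = sinK ρ α) ∧
    (sinK κ (2 * arctanK κ (((Real.sqrt (1 - κ * sinK ρ α ^ 2) - 1) /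
        (-κ * sinK ρ α * tanK ρ (α / 2))) * tanK ρ (α / 2))) = sinK ρ α) ∧
    (-Real.log ((Real.sqrt (1 - κ * sinK ρ α ^ 2) - 1) /
        (-κ * sinK ρ α * tanK ρ (α / 2)))
      = Real.log (-2 * κ * sinK ρ (α / 2) ^ 2 /
          (Real.sqrt (1 - κ * sinK ρ α ^ 2) - 1))) := by
  have hS : 0 < sinK ρ α := sinK_pos hα hρ
  have hs : 0 < sinK ρ (α / 2) := sinK_pos (half_pos hα) fun h ↦ by linarith [hρ h]
  have hc : 0 < cosK ρ (α / 2) := cosK_pos (half_pos hα).le fun h ↦ by linarith [hρ h]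
  have hT : 0 < tanK ρ (α / 2) := div_pos hs hc
  have hdiv := two_mul_conformalSigma_mul_div hκ hS.ne' hT.ne'
  have hden_pos : 0 < 1 + κ * conformalSigma κ (sinK ρ α) (tanK ρ (α / 2)) ^ 2 *
      tanK ρ (α / 2) ^ 2 := by
    rw [one_add_mul_conformalSigma_sq hκ hS.ne' hT.ne']; positivity
  refine ⟨conformalSigma_pos hκ (mul_pos hS hT), hden_pos, hdiv, ?_, ?_⟩
  · rw [sinK_two_mul_arctanK (by rwa [mul_pow, ← mul_assoc])]
    convert hdiv using 1
    rw [conformalSigma]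
    ring
  · rw [← Real.log_inv, inv_div, mul_assoc (-κ), sinK_mul_tanK_half hc.ne']
    congr 1
    ring
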